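/- Let I be a countable index set, ℓ₁, ℓ₂ : I → ℝ positive functions, and suppose for every natural number N the set {i : N ≤ ℓ₁(i) + ℓ₂(i) < N+1} has at most m·(N+1)^k elements (m > 0, k ∈ ℕ). Let α₁, α₂ : I → ℝ satisfy |α₁(i)| ≤ κ·ℓ₁(i) and |α₂(i)| ≤ κ·ℓ₂(i) for some κ > 0. Then for every L > 0 and every real a, the series ∑_{i ∈ I} [ H(ℓ₁(i)+ℓ₂(i), L)·a + K(ℓ₁(i)+ℓ₂(i), L)·(α₁(i)+α₂(i)) ] converges absolutely, where H(u,v) := 1/(1+e^{(u+v)/2}) + 1/(1+e^{(u-v)/2}) and K(u,v) := 1/(1+e^{(u+v)/2}) − 1/(1+e^{(u-v)/2}). -/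

import Mathlib

noncomputable def H (u v : ℝ) : ℝ :=
  1 / (1 + Real.exp ((u+v)/2)) + 1 / (1 + Real.exp ((u-v)/2))

noncomputable def K (u v : ℝ) : ℝ :=
  1 / (1 + Real.exp ((u+v)/2)) - 1 / (1 + Real.exp ((u-v)/2))

/-!
Both `H u L` and `|K u L|` are at most `2 cosh (L / 2) e^{-u/2}`, and `|α₁ + α₂| ≤ κ u`, so with
`u = ℓ₁ i + ℓ₂ i` the `i`-th term is `O(e^{-u/4})`. Grouping the indices into the unit shells
`N ≤ u < N + 1`, the `N`-th shell contributes at most `m (N + 1)^k e^{-N/4}`, which is summable in `N`.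
-/

open Real

lemma one_div_one_add_exp_le_exp_neg (x : ℝ) : 1 / (1 + exp x) ≤ exp (-x) := by
  rw [exp_neg, ← one_div]
  exact one_div_le_one_div_of_le (exp_pos x) (by linarith)

lemma H_nonneg (u v : ℝ) : 0 ≤ H u v := by
  unfold H; positivity

lemma abs_K_le_H (u v : ℝ) : |K u v| ≤ H u v := by
  unfold K H
  refine (abs_sub _ _).trans_eq ?_
  rw [abs_of_nonneg (by positivity), abs_of_nonneg (by positivity)]

lemma H_le_two_mul_cosh_mul_exp (u v : ℝ) : H u v ≤ 2 * cosh (v / 2) * exp (-u / 2) := by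
  have h₁ := one_div_one_add_exp_le_exp_neg ((u + v) / 2)
  have h₂ := one_div_one_add_exp_le_exp_neg ((u - v) / 2)
  calc H u v ≤ exp (-((u + v) / 2)) + exp (-((u - v) / 2)) := add_le_add h₁ h₂
    _ = 2 * cosh (v / 2) * exp (-u / 2) := by
      rw [cosh_eq, mul_div_cancel₀ _ two_ne_zero, add_mul, ← exp_add, ← exp_add]
      ring_nf

lemma abs_H_mul_add_K_mul_le (u v a b : ℝ) :
    |H u v * a + K u v * b| ≤ H u v * (|a| + |b|) :=
  calc |H u v * a + K u v * b| ≤ |H u v| * |a| + |K u v| * |b| := by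
        rw [← abs_mul, ← abs_mul]; exact abs_add_le _ _
    _ ≤ H u v * |a| + H u v * |b| := by
        rw [abs_of_nonneg (H_nonneg u v)]
        gcongr
        exact abs_K_le_H u v
    _ = H u v * (|a| + |b|) := by ring

lemma mul_exp_neg_half_le (u : ℝ) : u * exp (-u / 2) ≤ 4 * exp (-u / 4) := by
  have h : u / 4 ≤ exp (u / 4) := by linarith [add_one_le_exp (u / 4)]
  calc u * exp (-u / 2) ≤ 4 * exp (u / 4) * exp (-u / 2) := by gcongr; linarith
    _ = 4 * exp (-u / 4) := by rw [mul_assoc, ← exp_add]; ring_nf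

lemma summable_add_one_pow_mul_exp_neg_nat_mul (k : ℕ) {c : ℝ} (hc : 0 < c) :
    Summable fun n : ℕ => ((n : ℝ) + 1) ^ k * exp (-c * n) := by
  have h := ((summable_nat_add_iff 1).mpr (summable_pow_mul_exp_neg_nat_mul k hc)).mul_left (exp c)
  refine h.congr fun n => ?_
  push_cast
  rw [mul_left_comm, ← exp_add]
  ring_nf

section Shell

variable {I : Type*}

def shell (u : I → ℝ) (N : ℕ) : Set I := {i | (N : ℝ) ≤ u i ∧ u i < N + 1}

lemma existsUnique_mem_shell {u : I → ℝ} (hu : ∀ i, 0 ≤ u i) (i : I) :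
    ∃! N, i ∈ shell u N :=
  ⟨⌊u i⌋₊, ⟨Nat.floor_le (hu i), Nat.lt_floor_add_one _⟩,
    fun _ hN => ((Nat.floor_eq_iff (hu i)).mpr hN).symm⟩

lemma tsum_subtype_le_ncard_mul {f : I → ℝ} {s : Set I} (hs : s.Finite) {b : ℝ}
    (hb : ∀ i ∈ s, f i ≤ b) : ∑' i : s, f i ≤ s.ncard * b := by
  have := hs.fintype
  rw [tsum_fintype, ← Nat.card_coe_set_eq, Nat.card_eq_fintype_card, ← nsmul_eq_mul]
  exact Finset.sum_le_card_nsmul _ _ _ fun i _ => hb i i.2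

lemma summable_of_le_on_shell {f : I → ℝ} (hf : 0 ≤ f) {u : I → ℝ} (hu : ∀ i, 0 ≤ u i)
    (hfin : ∀ N, (shell u N).Finite) {b : ℕ → ℝ} (hb : ∀ N, ∀ i ∈ shell u N, f i ≤ b N)
    (hsum : Summable fun N => (shell u N).ncard * b N) : Summable f := by
  rw [summable_partition hf (existsUnique_mem_shell hu)]
  refine ⟨fun N => ?_, ?_⟩
  · have := (hfin N).to_subtype
    exact Summable.of_finite
  · exact hsum.of_nonneg_of_le (fun N => tsum_nonneg fun i => hf i)
      fun N => tsum_subtype_le_ncard_mul (hfin N) (hb N)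

theorem summable_of_abs_le_exp_of_ncard_shell_le {f u : I → ℝ} (hu : ∀ i, 0 ≤ u i)
    (hfin : ∀ N, (shell u N).Finite) {m : ℝ} {k : ℕ}
    (hcard : ∀ N : ℕ, ((shell u N).ncard : ℝ) ≤ m * (N + 1) ^ k) {C c : ℝ} (hC : 0 ≤ C)
    (hc : 0 < c) (hf : ∀ i, |f i| ≤ C * exp (-c * u i)) : Summable f := by
  refine Summable.of_abs (summable_of_le_on_shell (fun i => abs_nonneg (f i)) hu hfin
    (b := fun N => C * exp (-c * N)) (fun N i hi => (hf i).trans ?_) ?_)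
  · exact mul_le_mul_of_nonneg_left
      (exp_le_exp.mpr (mul_le_mul_of_nonpos_left hi.1 (by linarith))) hC
  · refine ((summable_add_one_pow_mul_exp_neg_nat_mul k hc).mul_left (m * C)).of_nonneg_of_le
      (fun N => by positivity) fun N => ?_
    calc ((shell u N).ncard : ℝ) * (C * exp (-c * N))
        ≤ m * (N + 1) ^ k * (C * exp (-c * N)) := by gcongr; exact hcard N
      _ = m * C * ((N + 1) ^ k * exp (-c * N)) := by ring

end Shell

theorem stmt11_general (I : Type*) (ℓ₁ ℓ₂ : I → ℝ)
    (hpos : ∀ i, 0 < ℓ₁ i ∧ 0 < ℓ₂ i)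
    (m : ℝ) (k : ℕ)
    (hfin : ∀ N : ℕ, {i : I | (N : ℝ) ≤ ℓ₁ i + ℓ₂ i ∧ ℓ₁ i + ℓ₂ i < N + 1}.Finite)
    (hcard : ∀ N : ℕ,
      ({i : I | (N : ℝ) ≤ ℓ₁ i + ℓ₂ i ∧ ℓ₁ i + ℓ₂ i < N + 1}.ncard : ℝ) ≤ m * (N + 1) ^ k)
    (α₁ α₂ : I → ℝ) (κ : ℝ) (hκ : 0 < κ)
    (hα : ∀ i, |α₁ i| ≤ κ * ℓ₁ i ∧ |α₂ i| ≤ κ * ℓ₂ i)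
    (L : ℝ) (a : ℝ) :
    Summable (fun i =>
      |H (ℓ₁ i + ℓ₂ i) L * a + K (ℓ₁ i + ℓ₂ i) L * (α₁ i + α₂ i)|) := by
  have hu : ∀ i, 0 ≤ ℓ₁ i + ℓ₂ i := fun i => add_nonneg (hpos i).1.le (hpos i).2.le
  refine summable_of_abs_le_exp_of_ncard_shell_le hu hfin hcard
    (C := 2 * cosh (L / 2) * (|a| + 4 * κ)) (c := 1 / 4) (by positivity) (by norm_num)
    fun i => ?_
  set u := ℓ₁ i + ℓ₂ i
  have hαu : |α₁ i + α₂ i| ≤ κ * u := (abs_add_le _ _).trans (by linarith [hα i])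
  have hdecay : exp (-u / 2) ≤ exp (-u / 4) := exp_le_exp.mpr (by linarith [hu i])
  rw [abs_abs]
  calc _ ≤ H u L * (|a| + κ * u) :=
        (abs_H_mul_add_K_mul_le _ _ _ _).trans (by gcongr; exact H_nonneg u L)
    _ ≤ 2 * cosh (L / 2) * exp (-u / 2) * (|a| + κ * u) := by
        gcongr
        · exact add_nonneg (abs_nonneg a) (mul_nonneg hκ.le (hu i))
        · exact H_le_two_mul_cosh_mul_exp u L
    _ = 2 * cosh (L / 2) * (|a| * exp (-u / 2) + κ * (u * exp (-u / 2))) := by ring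
    _ ≤ 2 * cosh (L / 2) * (|a| * exp (-u / 4) + κ * (4 * exp (-u / 4))) := by
        gcongr 2 * cosh (L / 2) * (|a| * ?_ + κ * ?_)
        exact mul_exp_neg_half_le u
    _ = 2 * cosh (L / 2) * (|a| + 4 * κ) * exp (-(1 / 4) * u) := by ring_nf

theorem stmt11 (I : Type*) [Countable I] (ℓ₁ ℓ₂ : I → ℝ)
    (hpos : ∀ i, 0 < ℓ₁ i ∧ 0 < ℓ₂ i)
    (m : ℝ) (hm : 0 < m) (k : ℕ)
    (hfin : ∀ N : ℕ, {i : I | (N : ℝ) ≤ ℓ₁ i + ℓ₂ i ∧ ℓ₁ i + ℓ₂ i < N + 1}.Finite)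
    (hcard : ∀ N : ℕ,
      ({i : I | (N : ℝ) ≤ ℓ₁ i + ℓ₂ i ∧ ℓ₁ i + ℓ₂ i < N + 1}.ncard : ℝ) ≤ m * (N + 1) ^ k)
    (α₁ α₂ : I → ℝ) (κ : ℝ) (hκ : 0 < κ)
    (hα : ∀ i, |α₁ i| ≤ κ * ℓ₁ i ∧ |α₂ i| ≤ κ * ℓ₂ i)
    (L : ℝ) (hL : 0 < L) (a : ℝ) :
    Summable (fun i =>
      |H (ℓ₁ i + ℓ₂ i) L * a + K (ℓ₁ i + ℓ₂ i) L * (α₁ i + α₂ i)|) :=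
  stmt11_general I ℓ₁ ℓ₂ hpos m k hfin hcard α₁ α₂ κ hκ hα L a
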